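/- arXiv:2507.06846 — 2 statements merged into one kernel-verified Lean document; each statement's English description precedes it below -/
import Mathlib

section
/- Let a_K be a symmetric positive semidefinite bilinear form on a vector space W and s_K a symmetric bilinear form satisfying α_* a_K(v,v) ≤ s_K(v,v) ≤ α^* a_K(v,v) for all v in a subspace N (with 0 < α_* ≤ α^*). Define a_h(u,v) := a_K(Πu, Πv) + s_K(u − Πu, v − Πv) for a projection Π : W → W with a_K(Πu − u, Πv) = 0 for all u ∈ W, v with Πv = v. Then for all v ∈ W, min{1, α_*} a_K(v,v) ≤ a_h(v,v) ≤ max{1, α^*} a_K(v,v). -/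
/-- Stability and boundedness of the VEM discrete bilinear form:
`min{1, α_*} a_K(v,v) ≤ a_h(v,v) ≤ max{1, α^*} a_K(v,v)`. -/
theorem vem_stability
    {W : Type*} [AddCommGroup W] [Module ℝ W]
    (aK sK : W →ₗ[ℝ] W →ₗ[ℝ] ℝ)
    (haKsymm : ∀ u v, aK u v = aK v u)
    (haKpos : ∀ v, 0 ≤ aK v v)
    (hsKsymm : ∀ u v, sK u v = sK v u)
    (proj : W →ₗ[ℝ] W) (hproj : ∀ u, proj (proj u) = proj u)
    (horth : ∀ u v, proj v = v → aK (proj u - u) v = 0)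
    (αs αt : ℝ) (hαs : 0 < αs) (hαst : αs ≤ αt)
    (hs : ∀ v, proj v = 0 → αs * aK v v ≤ sK v v ∧ sK v v ≤ αt * aK v v) :
    ∀ v : W,
      min 1 αs * aK v v ≤ aK (proj v) (proj v) + sK (v - proj v) (v - proj v) ∧
      aK (proj v) (proj v) + sK (v - proj v) (v - proj v) ≤ max 1 αt * aK v v := by
  intro v
  set p := proj v with hp
  set w := v - proj v with hw
  have hw0 : proj w = 0 := by
    simp [hw, map_sub, hproj]
  have horth' : aK w p = 0 := by
    have := horth v p (by simp [hp, hproj])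
    have h2 : aK (proj v - v) p = 0 := this
    have : w = -(proj v - v) := by rw [hw, neg_sub]
    rw [this, map_neg, LinearMap.neg_apply, h2, neg_zero]
  have hsplit : aK v v = aK p p + aK w w := by
    have hv : v = p + w := by simp [hp, hw]
    calc aK v v = aK (p + w) (p + w) := by rw [← hv]
    _ = aK p p + aK p w + (aK w p + aK w w) := by simp [map_add]; ring
    _ = aK p p + aK w w := by rw [haKsymm p w, horth']; ring
  obtain ⟨hs1, hs2⟩ := hs w hw0
  have hA := haKpos p
  have hB := haKpos w
  have hmin1 : min 1 αs ≤ 1 := min_le_left _ _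
  have hmin2 : min 1 αs ≤ αs := min_le_right _ _
  have hmax1 : (1:ℝ) ≤ max 1 αt := le_max_left _ _
  have hmax2 : αt ≤ max 1 αt := le_max_right _ _
  rw [hsplit]
  constructor <;> nlinarith [haKpos w, haKpos p]
end

section
/- Suppose T and T_h are bounded self-adjoint operators on a Hilbert space H with ‖T − T_h‖ ≤ ε, and μ is an isolated simple eigenvalue of T with spectral gap d := dist(μ, sp(T) \ {μ}) > 0. If ε < d/2, then T_h has spectrum in the disk of radius d/2 around μ, and any point μ_h ∈ sp(T_h) ∩ B(μ, d/2) satisfies |μ − μ_h| ≤ ‖T − T_h‖. -/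
open Module

set_option maxHeartbeats 1000000 in
open RealInnerProductSpace in
/-- For a self-adjoint operator `S` on a real Hilbert space whose spectrum avoids the
ball of radius `c` around `0`, we have the lower bound `c * ‖x‖ ≤ ‖S x‖`. -/
lemma aux_selfadjoint_lower_bound {H : Type*} [NormedAddCommGroup H]
    [InnerProductSpace ℝ H] [CompleteSpace H]
    (S : H →L[ℝ] H) (hS : IsSelfAdjoint S) (c : ℝ) (hc : 0 ≤ c)
    (hspec : ∀ lam ∈ spectrum ℝ S, c ≤ |lam|) (x : H) : c * ‖x‖ ≤ ‖S x‖ := by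
  by_contra hlt
  push_neg at hlt
  have hx0 : x ≠ 0 := by
    rintro rfl
    simp at hlt
  have hxn : 0 < ‖x‖ := norm_pos_iff.mpr hx0
  set x₁ : H := ‖x‖⁻¹ • x with hx₁def
  have hx₁ : ‖x₁‖ = 1 := by
    rw [hx₁def, norm_smul, norm_inv, norm_norm, inv_mul_cancel₀ hxn.ne']
  have hSx₁ : ‖S x₁‖ < c := by
    have : ‖S x₁‖ = ‖x‖⁻¹ * ‖S x‖ := by
      rw [hx₁def, map_smul, norm_smul, norm_inv, norm_norm]
    rw [this]
    calc ‖x‖⁻¹ * ‖S x‖ < ‖x‖⁻¹ * (c * ‖x‖) := by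
          exact mul_lt_mul_of_pos_left hlt (inv_pos.mpr hxn)
      _ = c := by field_simp
  -- the set of values of the quadratic form of `S * S` on the unit sphere
  set Q : Set ℝ := {r : ℝ | ∃ y : H, ‖y‖ = 1 ∧ r = ‖S y‖ ^ 2} with hQdef
  have hQne : Q.Nonempty := ⟨‖S x₁‖ ^ 2, x₁, hx₁, rfl⟩
  have hQbdd : BddBelow Q := ⟨0, by rintro r ⟨y, -, rfl⟩; positivity⟩
  set q : ℝ := sInf Q with hqdef
  have hq0 : 0 ≤ q := le_csInf hQne (by rintro r ⟨y, -, rfl⟩; positivity)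
  have hql : q < c ^ 2 := by
    have h1 : q ≤ ‖S x₁‖ ^ 2 := csInf_le hQbdd ⟨x₁, hx₁, rfl⟩
    have h2 : ‖S x₁‖ ^ 2 < c ^ 2 := by
      have := norm_nonneg (S x₁)
      nlinarith
    linarith
  -- R := S² - q
  set R : H →L[ℝ] H := S * S - algebraMap ℝ (H →L[ℝ] H) q with hRdef
  have hSsym : ∀ a b : H, ⟪S a, b⟫ = ⟪a, S b⟫ :=
    ContinuousLinearMap.isSelfAdjoint_iff_isSymmetric.mp hS
  have hRapp : ∀ y : H, R y = S (S y) - q • y := by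
    intro y
    simp [hRdef, Algebra.algebraMap_eq_smul_one, ContinuousLinearMap.mul_apply]
  have hRform : ∀ y : H, ⟪R y, y⟫ = ‖S y‖ ^ 2 - q * ‖y‖ ^ 2 := by
    intro y
    rw [hRapp, inner_sub_left, hSsym, real_inner_self_eq_norm_sq, real_inner_smul_left,
      real_inner_self_eq_norm_sq]
  have hRform0 : ∀ y : H, 0 ≤ ⟪R y, y⟫ := by
    intro y
    rw [hRform]
    rcases eq_or_ne y 0 with rfl | hy
    · simp
    · have hyn : 0 < ‖y‖ := norm_pos_iff.mpr hy
      have h1 : q ≤ ‖S (‖y‖⁻¹ • y)‖ ^ 2 := by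
        refine csInf_le hQbdd ⟨‖y‖⁻¹ • y, ?_, rfl⟩
        rw [norm_smul, norm_inv, norm_norm, inv_mul_cancel₀ hyn.ne']
      have h2 : ‖S (‖y‖⁻¹ • y)‖ ^ 2 = ‖y‖⁻¹ ^ 2 * ‖S y‖ ^ 2 := by
        rw [map_smul, norm_smul, norm_inv, norm_norm, mul_pow]
      rw [h2] at h1
      have h3 : q * ‖y‖ ^ 2 ≤ ‖S y‖ ^ 2 := by
        have := mul_le_mul_of_nonneg_right h1 (sq_nonneg ‖y‖)
        calc q * ‖y‖ ^ 2 ≤ ‖y‖⁻¹ ^ 2 * ‖S y‖ ^ 2 * ‖y‖ ^ 2 := this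
          _ = ‖S y‖ ^ 2 := by field_simp
      linarith
  have hRsym : ∀ a b : H, ⟪R a, b⟫ = ⟪a, R b⟫ := by
    intro a b
    rw [hRapp, hRapp, inner_sub_left, inner_sub_right, hSsym, hSsym,
      real_inner_smul_left, real_inner_smul_right]
  -- generalized Cauchy-Schwarz for the positive operator R
  have hCS : ∀ y : H, ‖R y‖ ^ 2 ≤ ‖R‖ * ⟪R y, y⟫ := by
    intro y
    have hquad : ∀ t : ℝ, 0 ≤ ⟪R (R y), R y⟫ * (t * t) + (2 * ‖R y‖ ^ 2) * t + ⟪R y, y⟫ := by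
      intro t
      have h0 := hRform0 (y + t • R y)
      have hexp : R (y + t • R y) = R y + t • R (R y) := by
        rw [map_add, map_smul]
      rw [hexp, inner_add_left, inner_add_right, inner_add_right,
        real_inner_smul_left, real_inner_smul_right, real_inner_smul_left,
        real_inner_smul_right] at h0
      have hsym1 : ⟪R (R y), y⟫ = ‖R y‖ ^ 2 := by
        rw [hRsym, real_inner_self_eq_norm_sq]
      have hsym2 : ⟪R y, R y⟫ = ‖R y‖ ^ 2 := real_inner_self_eq_norm_sq _
      rw [hsym1, hsym2] at h0
      nlinarith [h0]
    have hdisc := discrim_le_zero hquad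
    rw [discrim] at hdisc
    have hRRy : ⟪R (R y), R y⟫ ≤ ‖R‖ * ‖R y‖ ^ 2 := by
      calc ⟪R (R y), R y⟫ ≤ ‖R (R y)‖ * ‖R y‖ := real_inner_le_norm _ _
        _ ≤ (‖R‖ * ‖R y‖) * ‖R y‖ :=
          mul_le_mul_of_nonneg_right (R.le_opNorm _) (norm_nonneg _)
        _ = ‖R‖ * ‖R y‖ ^ 2 := by ring
    -- (2‖Ry‖²)² ≤ 4 ⟪R(Ry),Ry⟫ ⟪Ry,y⟫
    have h4 : ‖R y‖ ^ 2 * ‖R y‖ ^ 2 ≤ ⟪R (R y), R y⟫ * ⟪R y, y⟫ := by nlinarith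
    rcases eq_or_ne (R y) 0 with hz | hz
    · rw [hz]
      simp
    · have hRy : 0 < ‖R y‖ ^ 2 := pow_pos (norm_pos_iff.mpr hz) 2
      have h5 : ⟪R (R y), R y⟫ * ⟪R y, y⟫ ≤ (‖R‖ * ‖R y‖ ^ 2) * ⟪R y, y⟫ :=
        mul_le_mul_of_nonneg_right hRRy (hRform0 y)
      nlinarith
  -- R is not a unit
  have hRnotunit : ¬ IsUnit R := by
    intro hu
    obtain ⟨v, hv⟩ := hu
    have hlow : ∀ y : H, ‖y‖ ≤ ‖(↑v⁻¹ : H →L[ℝ] H)‖ * ‖R y‖ := by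
      intro y
      calc ‖y‖ = ‖(↑v⁻¹ : H →L[ℝ] H) (R y)‖ := by
            rw [← hv]
            have : (↑v⁻¹ : H →L[ℝ] H) ((↑v : H →L[ℝ] H) y) = ((↑v⁻¹ * ↑v : H →L[ℝ] H)) y := rfl
            rw [this, v.inv_mul]
            simp
        _ ≤ ‖(↑v⁻¹ : H →L[ℝ] H)‖ * ‖R y‖ := ContinuousLinearMap.le_opNorm _ _
    set K : ℝ := ‖(↑v⁻¹ : H →L[ℝ] H)‖ with hKdef
    have hK0 : 0 ≤ K := norm_nonneg _
    have hR0 : 0 < ‖R‖ := by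
      rcases (norm_nonneg R).lt_or_eq with h | h
      · exact h
      · exfalso
        have hRz : R = 0 := norm_eq_zero.mp h.symm
        have h1 := hlow x₁
        rw [hRz] at h1
        simp only [ContinuousLinearMap.zero_apply, norm_zero, mul_zero, hx₁] at h1
        linarith
    have hKpos : 0 < K := by
      by_contra hk
      push_neg at hk
      have := hlow x₁
      have hKz : K = 0 := le_antisymm hk hK0
      rw [hKz, zero_mul, hx₁] at this
      linarith
    -- every unit vector y satisfies ‖S y‖² ≥ q + ε
    set ε : ℝ := 1 / (K ^ 2 * ‖R‖) with hεdef
    have hεpos : 0 < ε := by positivity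
    have hlb : ∀ r ∈ Q, q + ε ≤ r := by
      rintro r ⟨y, hy, rfl⟩
      have h1 : 1 ≤ K * ‖R y‖ := by
        have := hlow y; rw [hy] at this; exact this
      have h2 : ‖R y‖ ^ 2 ≤ ‖R‖ * (‖S y‖ ^ 2 - q) := by
        have := hCS y
        rw [hRform, hy] at this
        simpa using this
      have h3 : 1 ≤ K ^ 2 * ‖R y‖ ^ 2 := by nlinarith
      have h4 : 1 ≤ K ^ 2 * (‖R‖ * (‖S y‖ ^ 2 - q)) := by nlinarith
      have h5 : ε ≤ ‖S y‖ ^ 2 - q := by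
        rw [hεdef]
        rw [div_le_iff₀ (by positivity)]
        nlinarith
      linarith
    have : q + ε ≤ q := le_csInf hQne hlb
    linarith
  -- factor R = (√q - S)(-√q - S); conclude √q or -√q is in the spectrum
  set s : ℝ := Real.sqrt q with hsdef
  have hs0 : 0 ≤ s := Real.sqrt_nonneg q
  have hs2 : s ^ 2 = q := Real.sq_sqrt hq0
  have hfac : (algebraMap ℝ (H →L[ℝ] H) s - S) * (algebraMap ℝ (H →L[ℝ] H) (-s) - S) = R := by
    have hcomm : algebraMap ℝ (H →L[ℝ] H) s * S = S * algebraMap ℝ (H →L[ℝ] H) s :=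
      Algebra.commutes s S
    have hq : algebraMap ℝ (H →L[ℝ] H) s * algebraMap ℝ (H →L[ℝ] H) s
        = algebraMap ℝ (H →L[ℝ] H) q := by
      rw [← (algebraMap ℝ (H →L[ℝ] H)).map_mul, ← sq, hs2]
    rw [hRdef, (algebraMap ℝ (H →L[ℝ] H)).map_neg, sub_mul, mul_sub, mul_sub, mul_neg,
      mul_neg, hcomm, hq]
    abel
  have hmem : s ∈ spectrum ℝ S ∨ (-s) ∈ spectrum ℝ S := by
    by_contra hm
    push_neg at hm
    obtain ⟨h1, h2⟩ := hm
    rw [spectrum.notMem_iff] at h1 h2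
    exact hRnotunit (hfac ▸ h1.mul h2)
  have hcs : c ≤ s := by
    rcases hmem with h | h
    · have := hspec s h; rwa [abs_of_nonneg hs0] at this
    · have := hspec (-s) h; rwa [abs_neg, abs_of_nonneg hs0] at this
  nlinarith

/-- Key perturbation lemma: if `B` is self-adjoint, `‖A - B‖ < c` and the spectrum of `B`
avoids the ball of radius `c` around `z`, then `z` is not in the spectrum of `A`. -/
lemma aux_key {H : Type*} [NormedAddCommGroup H] [InnerProductSpace ℝ H] [CompleteSpace H]
    (A B : H →L[ℝ] H) (hB : IsSelfAdjoint B) (z c : ℝ) (hc : 0 < c)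
    (hAB : ‖A - B‖ < c) (hs : ∀ lam ∈ spectrum ℝ B, c ≤ |z - lam|) :
    z ∉ spectrum ℝ A := by
  set S : H →L[ℝ] H := algebraMap ℝ (H →L[ℝ] H) z - B with hSdef
  have hzB : z ∉ spectrum ℝ B := by
    intro h
    have := hs z h
    simp at this
    linarith
  have halgsa : IsSelfAdjoint (algebraMap ℝ (H →L[ℝ] H) z) := by
    rw [Algebra.algebraMap_eq_smul_one]
    exact IsSelfAdjoint.smul (star_trivial z) (IsSelfAdjoint.one (H →L[ℝ] H))
  have hSsa : IsSelfAdjoint S := halgsa.sub hB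
  have hSspec : ∀ lam ∈ spectrum ℝ S, c ≤ |lam| := by
    intro lam hlam
    have hmem : z - lam ∈ spectrum ℝ B := by
      rw [spectrum.mem_iff] at hlam ⊢
      intro hun
      apply hlam
      have heq : algebraMap ℝ (H →L[ℝ] H) lam - S
          = -(algebraMap ℝ (H →L[ℝ] H) (z - lam) - B) := by
        rw [hSdef, map_sub]
        abel
      rw [heq]
      exact hun.neg
    have := hs _ hmem
    simpa using this
  have hlow : ∀ x, c * ‖x‖ ≤ ‖S x‖ := aux_selfadjoint_lower_bound S hSsa c hc.le hSspec
  obtain ⟨u, hu⟩ := spectrum.notMem_iff.mp hzB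
  have hinv : ‖(↑u⁻¹ : H →L[ℝ] H)‖ ≤ c⁻¹ := by
    refine ContinuousLinearMap.opNorm_le_bound _ (by positivity) fun y => ?_
    have h1 : c * ‖(↑u⁻¹ : H →L[ℝ] H) y‖ ≤ ‖S ((↑u⁻¹ : H →L[ℝ] H) y)‖ := hlow _
    have h2 : S ((↑u⁻¹ : H →L[ℝ] H) y) = y := by
      have : S ((↑u⁻¹ : H →L[ℝ] H) y) = ((↑u * ↑u⁻¹ : H →L[ℝ] H)) y := by rw [hu]; rfl
      rw [this, u.mul_inv]
      simp
    rw [h2] at h1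
    rw [inv_mul_eq_div, le_div_iff₀ hc]
    linarith [h1]
  set y0 : H →L[ℝ] H := (↑u⁻¹ : H →L[ℝ] H) * (A - B) with hy0def
  have hy0 : ‖y0‖ < 1 := by
    calc ‖y0‖ ≤ ‖(↑u⁻¹ : H →L[ℝ] H)‖ * ‖A - B‖ := norm_mul_le _ _
      _ ≤ c⁻¹ * ‖A - B‖ := mul_le_mul_of_nonneg_right hinv (norm_nonneg _)
      _ < c⁻¹ * c := by
          exact mul_lt_mul_of_pos_left hAB (by positivity)
      _ = 1 := inv_mul_cancel₀ hc.ne'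
  rw [spectrum.notMem_iff]
  have hfac : algebraMap ℝ (H →L[ℝ] H) z - A = ↑u * (1 - y0) := by
    rw [mul_sub, mul_one, hy0def, ← mul_assoc, u.mul_inv, one_mul, hu]
    abel
  rw [hfac]
  exact u.isUnit.mul (Units.oneSub y0 hy0).isUnit

/-- An eigenvalue of a continuous linear map lies in its spectrum. -/
lemma aux_eig_mem {H : Type*} [NormedAddCommGroup H] [InnerProductSpace ℝ H] [CompleteSpace H]
    (T : H →L[ℝ] H) (μ : ℝ) (hμ : Module.End.HasEigenvalue (T : H →ₗ[ℝ] H) μ) :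
    μ ∈ spectrum ℝ T := by
  obtain ⟨v, hv⟩ := hμ.exists_hasEigenvector
  have hv0 : v ≠ 0 := hv.right
  have hTv : T v = μ • v := hv.apply_eq_smul
  rw [spectrum.mem_iff]
  intro hun
  obtain ⟨w, hw⟩ := hun
  apply hv0
  have hz : (algebraMap ℝ (H →L[ℝ] H) μ - T) v = 0 := by
    simp [Algebra.algebraMap_eq_smul_one, ContinuousLinearMap.sub_apply, hTv]
  calc v = ((↑w⁻¹ * ↑w : H →L[ℝ] H)) v := by rw [w.inv_mul]; simp
    _ = (↑w⁻¹ : H →L[ℝ] H) (((↑w : H →L[ℝ] H)) v) := rfl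
    _ = 0 := by rw [hw, hz, map_zero]

/-- Self-adjoint spectral perturbation: if `‖T − T_h‖ ≤ ε < d/2` where `d` is the
spectral gap of an isolated simple eigenvalue `μ` of `T`, then `T_h` has spectrum
in the ball `B(μ, d/2)` and every such spectral point `μ_h` satisfies
`|μ − μ_h| ≤ ‖T − T_h‖`. -/
theorem selfadjoint_spectral_perturbation
    {H : Type*} [NormedAddCommGroup H] [InnerProductSpace ℝ H] [CompleteSpace H]
    (T Th : H →L[ℝ] H) (hT : IsSelfAdjoint T) (hTh : IsSelfAdjoint Th)
    (ε : ℝ) (hdiff : ‖T - Th‖ ≤ ε)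
    (μ : ℝ) (hμ : Module.End.HasEigenvalue (T : H →ₗ[ℝ] H) μ)
    (hsimple : Module.finrank ℝ (Module.End.eigenspace (T : H →ₗ[ℝ] H) μ) = 1)
    (d : ℝ) (hd : d = Metric.infDist μ (spectrum ℝ T \ {μ})) (hdpos : 0 < d)
    (hε : ε < d / 2) :
    (∃ μh ∈ spectrum ℝ Th, μh ∈ Metric.ball μ (d / 2)) ∧
    ∀ μh ∈ spectrum ℝ Th, μh ∈ Metric.ball μ (d / 2) → |μ - μh| ≤ ‖T - Th‖ := by
  have hμT : μ ∈ spectrum ℝ T := aux_eig_mem T μ hμ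
  have hδ : ‖T - Th‖ < d / 2 := lt_of_le_of_lt hdiff hε
  have hδ0 : 0 ≤ ‖T - Th‖ := norm_nonneg _
  constructor
  · by_contra hcon
    push_neg at hcon
    have hs : ∀ lam ∈ spectrum ℝ Th, d / 2 ≤ |μ - lam| := by
      intro lam hlam
      have := hcon lam hlam
      rw [Metric.mem_ball, Real.dist_eq] at this
      push_neg at this
      rwa [abs_sub_comm]
    exact (aux_key T Th hTh μ (d / 2) (by linarith) hδ hs) hμT
  · intro μh hμh hball
    by_contra hcon
    push_neg at hcon
    rw [Metric.mem_ball, Real.dist_eq] at hball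
    set c : ℝ := min (|μ - μh|) (d / 2) with hcdef
    have hc0 : 0 < c := lt_min (lt_of_le_of_lt hδ0 hcon) (by linarith)
    have hThT : ‖Th - T‖ < c := by
      rw [norm_sub_rev]
      exact lt_min hcon hδ
    have hs : ∀ lam ∈ spectrum ℝ T, c ≤ |μh - lam| := by
      intro lam hlam
      rcases eq_or_ne lam μ with rfl | hne
      · rw [abs_sub_comm]
        exact min_le_left _ _
      · have hmemd : lam ∈ spectrum ℝ T \ {μ} := ⟨hlam, hne⟩
        have hdle : d ≤ |μ - lam| := by
          rw [hd]
          have := Metric.infDist_le_dist_of_mem (x := μ) hmemd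
          rwa [Real.dist_eq] at this
        have habs : |μh - μ| < d / 2 := hball
        have : d / 2 ≤ |μh - lam| := by
          have h1 : |μ - lam| ≤ |μ - μh| + |μh - lam| := abs_sub_le μ μh lam
          have h2 : |μ - μh| = |μh - μ| := abs_sub_comm μ μh
          linarith
        exact le_trans (min_le_right _ _) this
    exact absurd hμh (aux_key Th T hT μh c hc0 hThT hs)
end
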